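/- arXiv:2004.01129 — 6 statements merged into one kernel-verified Lean document; each statement's English description precedes it below -/
import Mathlib

section
/- K-fractional revival occurs in X at time τ > 0 if and only if the density matrix (1/|K|)·D_K is periodic at time τ, i.e., U(τ)·(1/|K|)D_K·U(-τ) = (1/|K|)D_K, where U(t) = e^{-itA} and D_K = Σ_{a∈K} e_a e_a^T. -/
open Matrix

/-- Transition matrix `U(t) = e^{-itA}` of the continuous-time quantum walk. -/
noncomputable def transU {n : ℕ} (A : Matrix (Fin n) (Fin n) ℝ) (t : ℝ) :
    Matrix (Fin n) (Fin n) ℂ :=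
  NormedSpace.exp ((-Complex.I * (t : ℂ)) • A.map (Complex.ofReal))

/-- `D_K = Σ_{a ∈ K} e_a e_a^T`, the diagonal 0-1 matrix with 1's on K. -/
def DKmat {n : ℕ} (K : Finset (Fin n)) : Matrix (Fin n) (Fin n) ℂ :=
  Matrix.of fun i j => if i = j ∧ i ∈ K then 1 else 0

/-! Since `U(-τ)` inverts `U(τ)`, periodicity of the (nonzero) density matrix says exactly that
`U(τ)` commutes with the diagonal matrix `D_K`, and a matrix commutes with a diagonal matrix iff
its entries vanish wherever the two diagonal entries differ. -/

lemma transU_mul_transU_neg {n : ℕ} (A : Matrix (Fin n) (Fin n) ℝ) (t : ℝ) :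
    transU A t * transU A (-t) = 1 := by
  unfold transU
  rw [← Matrix.exp_add_of_commute _ _ ((Commute.refl _).smul_left _ |>.smul_right _), ← add_smul]
  push_cast
  simp [NormedSpace.exp_zero]

lemma transU_neg_mul_transU {n : ℕ} (A : Matrix (Fin n) (Fin n) ℝ) (t : ℝ) :
    transU A (-t) * transU A t = 1 :=
  mul_eq_one_comm.mp (transU_mul_transU_neg A t)

lemma DKmat_eq_diagonal {n : ℕ} (K : Finset (Fin n)) :
    DKmat K = diagonal fun i => if i ∈ K then (1 : ℂ) else 0 := by
  ext i j
  by_cases h : i = j <;> simp [DKmat, diagonal, h]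

lemma conj_eq_self_iff_commute {M : Type*} [Monoid M] {u v x : M} (huv : u * v = 1)
    (hvu : v * u = 1) : u * x * v = x ↔ Commute u x :=
  (Units.mul_inv_eq_iff_eq_mul (b := ⟨u, v, huv, hvu⟩)).trans (commute_iff_eq u x).symm

namespace Matrix

variable {ι R : Type*} [Fintype ι] [DecidableEq ι] [CommRing R] [NoZeroDivisors R]

lemma commute_diagonal_iff {M : Matrix ι ι R} {d : ι → R} :
    Commute M (diagonal d) ↔ ∀ a b, d a ≠ d b → M a b = 0 := by
  have entry (a b : ι) : M a b * d b = d a * M a b ↔ (d a ≠ d b → M a b = 0) := by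
    rw [mul_comm, ← sub_eq_zero, ← sub_mul, mul_eq_zero, sub_eq_zero, eq_comm (a := d b),
      or_iff_not_imp_left]
  simp only [Commute, SemiconjBy, ← Matrix.ext_iff, mul_diagonal, diagonal_mul, entry]

end Matrix

theorem kfr_iff_density_periodic_general {n : ℕ} (A : Matrix (Fin n) (Fin n) ℝ)
    (K : Finset (Fin n)) (hK : K.Nonempty) (τ : ℝ) :
    (∀ a b : Fin n, ((a ∈ K ∧ b ∉ K) ∨ (a ∉ K ∧ b ∈ K)) → transU A τ a b = 0) ↔
      transU A τ * ((K.card : ℂ)⁻¹ • DKmat K) * transU A (-τ)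
        = (K.card : ℂ)⁻¹ • DKmat K := by
  have hc : (K.card : ℂ)⁻¹ ≠ 0 := by simpa using hK.card_ne_zero
  rw [Matrix.mul_smul, Matrix.smul_mul, (smul_right_injective _ hc).eq_iff,
    conj_eq_self_iff_commute (transU_mul_transU_neg A τ) (transU_neg_mul_transU A τ),
    DKmat_eq_diagonal, commute_diagonal_iff]
  refine forall₂_congr fun a b => ?_
  by_cases ha : a ∈ K <;> by_cases hb : b ∈ K <;> simp [ha, hb]

/-- K-fractional revival occurs at time τ > 0 iff the density matrix
`(1/|K|)·D_K` is periodic at time τ. -/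
theorem kfr_iff_density_periodic {n : ℕ} (A : Matrix (Fin n) (Fin n) ℝ)
    (hA : A.IsSymm) (K : Finset (Fin n)) (hK : K.Nonempty) (τ : ℝ) (hτ : 0 < τ) :
    (∀ a b : Fin n, ((a ∈ K ∧ b ∉ K) ∨ (a ∉ K ∧ b ∈ K)) → transU A τ a b = 0) ↔
      transU A τ * ((K.card : ℂ)⁻¹ • DKmat K) * transU A (-τ)
        = (K.card : ℂ)⁻¹ • DKmat K :=
  kfr_iff_density_periodic_general A K hK τ
end

section
/- A complex symmetric unitary matrix H (H^T = H and H*H = I) has an orthonormal basis of real eigenvectors. -/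
/-!
Write `H = A + iB` with `A`, `B` real. Symmetry of `H` makes `A` and `B` symmetric, and the
imaginary part of `Hᴴ * H = (A - iB)(A + iB)` is `AB - BA`, so unitarity makes `A` and `B` commute.
Commuting real symmetric matrices have a common orthonormal eigenbasis, and a common real
eigenvector of `A` and `B` is an eigenvector of `H`.
-/

open Matrix Module.End

section OrthonormalBasis

variable {𝕜 E : Type*} [RCLike 𝕜] [NormedAddCommGroup E] [InnerProductSpace 𝕜 E]
  [FiniteDimensional 𝕜 E]

theorem DirectSum.IsInternal.exists_orthonormalBasis_forall_exists_mem {ι : Type*}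
    [DecidableEq ι] {V : ι → Submodule 𝕜 E} (hV : DirectSum.IsInternal V)
    (hV' : OrthogonalFamily 𝕜 (fun i => V i) fun i => (V i).subtypeₗᵢ)
    {n : ℕ} (hn : Module.finrank 𝕜 E = n) :
    ∃ b : OrthonormalBasis (Fin n) 𝕜 E, ∀ a, ∃ i, b a ∈ V i := by
  -- `subordinateOrthonormalBasis` needs a finite index type; only finitely many `V i` are nonzero
  let ι' := {i // V i ≠ ⊥}
  let _ : Fintype ι' := hV.submodule_iSupIndep.fintypeNeBotOfFiniteDimensional
  have hV₀ : DirectSum.IsInternal fun i : ι' => V i := by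
    rw [DirectSum.isInternal_submodule_iff_iSupIndep_and_iSup_eq_top, iSup_ne_bot_subtype]
    exact ⟨hV.submodule_iSupIndep.comp Subtype.val_injective, hV.submodule_iSup_eq_top⟩
  have hV₀' := hV'.comp (Subtype.val_injective : Function.Injective (Subtype.val : ι' → ι))
  exact ⟨hV₀.subordinateOrthonormalBasis hn hV₀', fun a =>
    ⟨_, hV₀.subordinateOrthonormalBasis_subordinate hn a hV₀'⟩⟩

theorem LinearMap.IsSymmetric.exists_orthonormalBasis_forall_mem_eigenspace_inf_eigenspace
    {A B : E →ₗ[𝕜] E} (hA : A.IsSymmetric) (hB : B.IsSymmetric) (hAB : Commute A B)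
    {n : ℕ} (hn : Module.finrank 𝕜 E = n) :
    ∃ b : OrthonormalBasis (Fin n) 𝕜 E, ∀ a, ∃ α β : 𝕜, b a ∈ eigenspace A α ⊓ eigenspace B β := by
  classical
  obtain ⟨b, hb⟩ := DirectSum.IsInternal.exists_orthonormalBasis_forall_exists_mem
    (hA.directSum_isInternal_of_commute hB hAB)
    (hA.orthogonalFamily_eigenspace_inf_eigenspace hB) hn
  exact ⟨b, fun a => let ⟨p, hp⟩ := hb a; ⟨p.2, p.1, hp⟩⟩

end OrthonormalBasis

namespace Matrix

variable {m n : Type*} [Fintype n]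

theorem map_im_map_conj_mul (X : Matrix m n ℂ) (Y : Matrix n m ℂ) :
    (X.map (starRingEnd ℂ) * Y).map Complex.im =
      X.map Complex.re * Y.map Complex.im - X.map Complex.im * Y.map Complex.re := by
  ext i j
  simp [mul_apply, Complex.im_sum, Complex.mul_im, sub_eq_add_neg, Finset.sum_add_distrib]

theorem IsSymm.commute_map_re_map_im [DecidableEq n] {H : Matrix n n ℂ} (hH : H.IsSymm)
    (hU : Hᴴ * H = 1) :
    Commute (H.map Complex.re) (H.map Complex.im) := by
  have hconj : Hᴴ = H.map (starRingEnd ℂ) := by ext i j; simp [hH.apply i j]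
  have hone : (1 : Matrix n n ℂ).map Complex.im = 0 := by ext i j; simp [one_apply, apply_ite]
  have him := H.map_im_map_conj_mul H
  rw [← hconj, hU, hone] at him
  exact sub_eq_zero.mp him.symm

theorem mulVec_ofReal_eq_smul {H : Matrix n n ℂ} {v : n → ℝ} {α β : ℝ}
    (hre : H.map Complex.re *ᵥ v = α • v) (him : H.map Complex.im *ᵥ v = β • v) :
    H *ᵥ (fun k => (v k : ℂ)) = (⟨α, β⟩ : ℂ) • fun k => (v k : ℂ) := by
  refine funext fun i => Complex.ext ?_ ?_
  · simpa [mulVec, dotProduct, Complex.re_sum] using congrFun hre i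
  · simpa [mulVec, dotProduct, Complex.im_sum] using congrFun him i

theorem mem_eigenspace_toEuclideanLin_iff {𝕜 : Type*} [RCLike 𝕜] [DecidableEq n]
    {A : Matrix n n 𝕜} {μ : 𝕜} {x : EuclideanSpace 𝕜 n} :
    x ∈ eigenspace A.toEuclideanLin μ ↔ A *ᵥ x.ofLp = μ • x.ofLp := by
  rw [mem_eigenspace_iff, ← (WithLp.ofLp_injective 2).eq_iff]
  rfl

end Matrix

/-- A complex symmetric unitary matrix has an orthonormal basis of real
eigenvectors. -/
theorem symm_unitary_real_eigenbasis {n : ℕ}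
    (H : Matrix (Fin n) (Fin n) ℂ) (hsymm : H.IsSymm)
    (hunit : H.conjTranspose * H = 1) :
    ∃ v : Fin n → (Fin n → ℝ),
      (∀ i j : Fin n, (v i) ⬝ᵥ (v j) = if i = j then 1 else 0) ∧
      (∀ i : Fin n, ∃ μ : ℂ,
        H.mulVec (fun k => ((v i k : ℝ) : ℂ)) = μ • (fun k => ((v i k : ℝ) : ℂ))) := by
  have hsymm' (f : ℂ → ℝ) : (H.map f).toEuclideanLin.IsSymmetric :=
    isSymmetric_toEuclideanLin_iff.mpr (isHermitian_iff_isSymm.mpr (hsymm.map f))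
  have hAB := (hsymm.commute_map_re_map_im hunit).map (toLpLinAlgEquiv 2)
  obtain ⟨b, hb⟩ :=
    (hsymm' _).exists_orthonormalBasis_forall_mem_eigenspace_inf_eigenspace (hsymm' _) hAB
      finrank_euclideanSpace_fin
  refine ⟨fun i => (b i).ofLp, fun i j => ?_, fun i => ?_⟩
  · have := orthonormal_iff_ite.mp b.orthonormal i j
    rwa [EuclideanSpace.inner_eq_star_dotProduct, star_trivial, dotProduct_comm] at this
  · obtain ⟨α, β, hα, hβ⟩ := hb i
    exact ⟨⟨α, β⟩, mulVec_ofReal_eq_smul (mem_eigenspace_toEuclideanLin_iff.mp hα)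
      (mem_eigenspace_toEuclideanLin_iff.mp hβ)⟩
end

section
/- Let X be a graph with real weights, K = {a,b}. If X is properly decomposable with respect to K (the adjacency algebra contains a block-diagonal matrix diag(H, H') whose 2×2 block H on rows/columns a,b is non-diagonal), then the 2×2 principal submatrices Ẽ_r of the principal idempotents (on rows and columns a, b) pairwise commute. -/
/-!
Each principal idempotent `E r` commutes with `A`, hence with the polynomial `M = P(A)` of
the decomposition. As `M` has no entries linking `K = {a, b}` to its complement, the `(a, b)`
entry of `E r * M = M * E r` reads `M a b * (E r a a - E r b b) = (M a a - M b b) * E r a b`.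
Since `M a b ≠ 0`, the vectors `(E r a a - E r b b, E r a b)` are all proportional to one
fixed vector, and for symmetric `2 × 2` matrices this proportionality is exactly commutation.
-/

open Matrix

theorem commute_sum_smul_of_mul_eq_zero {κ R S : Type*} [Fintype κ] [CommSemiring R]
    [Semiring S] [Algebra R S] (E : κ → S) (horth : ∀ r s, r ≠ s → E r * E s = 0)
    (c : κ → R) (r : κ) : Commute (E r) (∑ s, c s • E s) := by
  refine Commute.sum_right _ _ _ fun s _ => Commute.smul_right ?_ _
  rcases eq_or_ne r s with rfl | hrs
  · exact Commute.refl _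
  · exact (horth r s hrs).trans (horth s r hrs.symm).symm

namespace Matrix

variable {ι R : Type*} [Fintype ι] [CommRing R]

theorem mul_apply_eq_add_of_ne {a b : ι} (hab : a ≠ b) (N M : Matrix ι ι R) (i j : ι)
    (h : ∀ k, k ≠ a → k ≠ b → N i k * M k j = 0) :
    (N * M) i j = N i a * M a j + N i b * M b j :=
  Fintype.sum_eq_add a b hab fun k hk => h k hk.1 hk.2

theorem apply_mul_sub_eq_of_commute {a b : ι} (hab : a ≠ b) {N M : Matrix ι ι R}
    (h : Commute N M) (hcol : ∀ k, k ≠ a → k ≠ b → M k b = 0)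
    (hrow : ∀ k, k ≠ a → k ≠ b → M a k = 0) :
    M a b * (N a a - N b b) = (M a a - M b b) * N a b := by
  have hab_entry := congrFun (congrFun h.eq a) b
  rw [mul_apply_eq_add_of_ne hab _ _ _ _ fun k hka hkb => by rw [hcol k hka hkb, mul_zero],
    mul_apply_eq_add_of_ne hab _ _ _ _ fun k hka hkb => by rw [hrow k hka hkb, zero_mul]]
    at hab_entry
  linear_combination hab_entry

theorem commute_fin_two_of_sub_mul_eq {e f g e' f' g' : R}
    (h : (e - g) * f' = (e' - g') * f) : Commute !![e, f; f, g] !![e', f'; f', g'] := by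
  rw [Commute, SemiconjBy, mul_fin_two, mul_fin_two]
  ext i j
  fin_cases i <;> fin_cases j
  all_goals simp only [Fin.zero_eta, Fin.mk_one, Fin.isValue, of_apply, cons_val', cons_val_zero,
    cons_val_one, cons_val_fin_one]
  · ring
  · linear_combination h
  · linear_combination -h
  · ring

end Matrix

theorem properly_decomposable_implies_submatrices_commute_general {n d : ℕ}
    (A : Matrix (Fin n) (Fin n) ℝ)
    (θ : Fin (d + 1) → ℝ) (E : Fin (d + 1) → Matrix (Fin n) (Fin n) ℝ)
    (hA : A = ∑ r, θ r • E r)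
    (hsymm : ∀ r, (E r).IsSymm)
    (horth : ∀ r s, r ≠ s → E r * E s = 0)
    (a b : Fin n) (hab : a ≠ b)
    (hdecomp : ∃ P : Polynomial ℂ,
      (∀ i j : Fin n,
        (((i = a ∨ i = b) ∧ ¬(j = a ∨ j = b)) ∨ (¬(i = a ∨ i = b) ∧ (j = a ∨ j = b))) →
        Polynomial.aeval (A.map Complex.ofReal) P i j = 0) ∧
      Polynomial.aeval (A.map Complex.ofReal) P a b ≠ 0) :
    ∀ r s : Fin (d + 1),
      !![E r a a, E r a b; E r b a, E r b b] * !![E s a a, E s a b; E s b a, E s b b]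
        = !![E s a a, E s a b; E s b a, E s b b] * !![E r a a, E r a b; E r b a, E r b b] := by
  obtain ⟨P, hblock, hM_ab⟩ := hdecomp
  set M := Polynomial.aeval (A.map Complex.ofReal) P
  have hEM (r : Fin (d + 1)) : Commute ((E r).map Complex.ofReal) M :=
    Algebra.commute_of_mem_adjoin_singleton_of_commute
      (Polynomial.aeval_mem_adjoin_singleton ℂ _)
      ((hA ▸ commute_sum_smul_of_mul_eq_zero E horth θ r).map Complex.ofRealHom.mapMatrix)
  have hkey (r : Fin (d + 1)) :
      M a b * ((E r a a : ℂ) - E r b b) = (M a a - M b b) * E r a b :=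
    apply_mul_sub_eq_of_commute hab (hEM r) (fun k hka hkb => hblock k b (by tauto))
      (fun k hka hkb => hblock a k (by tauto))
  intro r s
  rw [(hsymm r).apply a b, (hsymm s).apply a b]
  refine (commute_fin_two_of_sub_mul_eq ?_).eq
  have hcross : M a b * (((E r a a : ℂ) - E r b b) * E s a b)
      = M a b * (((E s a a : ℂ) - E s b b) * E r a b) := by
    linear_combination (E s a b : ℂ) * hkey r - (E r a b : ℂ) * hkey s
  exact_mod_cast mul_left_cancel₀ hM_ab hcross

/-- If a connected graph with real weights is properly decomposable with
respect to `K = {a,b}`, then the `2×2` principal submatrices of the principal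
idempotents on rows and columns `a, b` pairwise commute. -/
theorem properly_decomposable_implies_submatrices_commute {n d : ℕ}
    (A : Matrix (Fin n) (Fin n) ℝ)
    (θ : Fin (d + 1) → ℝ) (E : Fin (d + 1) → Matrix (Fin n) (Fin n) ℝ)
    (hA : A = ∑ r, θ r • E r) (hθ : Function.Injective θ)
    (hsymm : ∀ r, (E r).IsSymm)
    (hidem : ∀ r, E r * E r = E r)
    (horth : ∀ r s, r ≠ s → E r * E s = 0)
    (hsum : ∑ r, E r = 1)
    (hconn : ∀ u v : Fin n, ∃ k : ℕ, (A ^ k) u v ≠ 0)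
    (a b : Fin n) (hab : a ≠ b)
    (hdecomp : ∃ P : Polynomial ℂ,
      (∀ i j : Fin n,
        (((i = a ∨ i = b) ∧ ¬(j = a ∨ j = b)) ∨ (¬(i = a ∨ i = b) ∧ (j = a ∨ j = b))) →
        Polynomial.aeval (A.map Complex.ofReal) P i j = 0) ∧
      Polynomial.aeval (A.map Complex.ofReal) P a b ≠ 0) :
    ∀ r s : Fin (d + 1),
      !![E r a a, E r a b; E r b a, E r b b] * !![E s a a, E s a b; E s b a, E s b b]
        = !![E s a a, E s a b; E s b a, E s b b] * !![E r a a, E r a b; E r b a, E r b b] :=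
  properly_decomposable_implies_submatrices_commute_general A θ E hA hsymm horth a b hab hdecomp
end

section
/- For distinct vertices a, b of a connected weighted graph with real symmetric adjacency matrix A = Σ θ_r E_r, and nonzero reals p, q with p²+q²=1, the following are equivalent: (i) for every r, (E_r)_{a,a} − (E_r)_{b,b} = (p/q − q/p)(E_r)_{a,b}; (ii) for every k ≥ 0, (A^k)_{a,a} − (A^k)_{b,b} = (p/q − q/p)(A^k)_{a,b}; (iii) the 2×2 principal submatrices Ẽ_r on {a,b} pairwise commute (with p, q determined as the common eigenvector data). -/
open Matrix

/-- Equivalent characterizations of fractional cospectrality of two vertices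
`a`, `b` of a connected weighted graph: the idempotent condition (i), the
walk-matrix condition (ii), and pairwise commutation of the `2×2` principal
submatrices of the idempotents (iii), with `p, q` the common eigenvector data. -/
theorem fractionally_cospectral_equivalences {n d : ℕ}
    (A : Matrix (Fin n) (Fin n) ℝ)
    (θ : Fin (d + 1) → ℝ) (E : Fin (d + 1) → Matrix (Fin n) (Fin n) ℝ)
    (hA : A = ∑ r, θ r • E r) (hθ : Function.Injective θ)
    (hsymm : ∀ r, (E r).IsSymm)
    (hidem : ∀ r, E r * E r = E r)
    (horth : ∀ r s, r ≠ s → E r * E s = 0)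
    (hsum : ∑ r, E r = 1)
    (hconn : ∀ u v : Fin n, ∃ k : ℕ, (A ^ k) u v ≠ 0)
    (a b : Fin n) (hab : a ≠ b)
    (p q : ℝ) (hp : p ≠ 0) (hq : q ≠ 0) (hpq : p ^ 2 + q ^ 2 = 1) :
    ((∀ r, E r a a - E r b b = (p / q - q / p) * E r a b) ↔
        (∀ k : ℕ, (A ^ k) a a - (A ^ k) b b = (p / q - q / p) * (A ^ k) a b)) ∧
    ((∀ r, E r a a - E r b b = (p / q - q / p) * E r a b) →
        (∀ r s : Fin (d + 1),
          !![E r a a, E r a b; E r b a, E r b b] * !![E s a a, E s a b; E s b a, E s b b]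
            = !![E s a a, E s a b; E s b a, E s b b] * !![E r a a, E r a b; E r b a, E r b b])) ∧
    ((∀ r s : Fin (d + 1),
        !![E r a a, E r a b; E r b a, E r b b] * !![E s a a, E s a b; E s b a, E s b b]
          = !![E s a a, E s a b; E s b a, E s b b] * !![E r a a, E r a b; E r b a, E r b b]) →
        ∃ p' q' : ℝ, p' ≠ 0 ∧ q' ≠ 0 ∧ p' ^ 2 + q' ^ 2 = 1 ∧
          ∀ r, E r a a - E r b b = (p' / q' - q' / p') * E r a b) := by
  have hsymE : ∀ r, E r b a = E r a b := by
    intro r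
    have h := hsymm r
    rw [Matrix.IsSymm] at h
    have := congrFun (congrFun h a) b
    simpa [Matrix.transpose_apply] using this
  have hpow : ∀ k : ℕ, A ^ k = ∑ r, (θ r ^ k) • E r := by
    intro k
    induction k with
    | zero => simpa using hsum.symm
    | succ k ih =>
      rw [pow_succ, ih, hA, Finset.sum_mul_sum]
      refine Finset.sum_congr rfl fun r _ => ?_
      rw [Finset.sum_eq_single r]
      · rw [smul_mul_assoc, mul_smul_comm, hidem r, smul_smul, ← pow_succ]
      · intro s _ hs
        rw [smul_mul_assoc, mul_smul_comm, horth r s (Ne.symm hs), smul_zero, smul_zero]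
      · intro h; exact absurd (Finset.mem_univ r) h
  have hEntry : ∀ (k : ℕ) (i j : Fin n), (A ^ k) i j = ∑ r, θ r ^ k * E r i j := by
    intro k i j
    rw [hpow k]
    simp [Matrix.sum_apply]
  refine ⟨⟨fun h k => ?_, fun h r => ?_⟩, fun h r s => ?_, fun hcomm => ?_⟩
  · -- (i) → (ii)
    rw [hEntry, hEntry, hEntry, ← Finset.sum_sub_distrib, Finset.mul_sum]
    refine Finset.sum_congr rfl fun r _ => ?_
    rw [← mul_sub, h r]
    ring
  · -- (ii) → (i)
    set x : Fin (d + 1) → ℝ := fun s => E s a a - E s b b - (p / q - q / p) * E s a b with hx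
    have hxk : ∀ k : ℕ, ∑ s, x s * θ s ^ k = 0 := by
      intro k
      have h1 : ∑ s, x s * θ s ^ k
          = (A ^ k) a a - (A ^ k) b b - (p / q - q / p) * (A ^ k) a b := by
        rw [hEntry, hEntry, hEntry, Finset.mul_sum, ← Finset.sum_sub_distrib,
          ← Finset.sum_sub_distrib]
        refine Finset.sum_congr rfl fun s _ => ?_
        simp only [hx]
        ring
      rw [h1, h k]
      ring
    have hv : x ᵥ* Matrix.vandermonde θ = 0 := by
      funext j
      have := hxk (j : ℕ)
      simpa [Matrix.vecMul, Matrix.vandermonde, dotProduct] using this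
    have hdet : (Matrix.vandermonde θ).det ≠ 0 := by
      rw [Matrix.det_vandermonde]
      refine Finset.prod_ne_zero_iff.mpr fun i _ => Finset.prod_ne_zero_iff.mpr fun j hj => ?_
      exact sub_ne_zero.mpr fun hh => (Finset.mem_Ioi.mp hj).ne' (hθ hh)
    have hxz : x = 0 := by
      have hu : IsUnit (Matrix.vandermonde θ).det := isUnit_iff_ne_zero.mpr hdet
      calc x = x ᵥ* (Matrix.vandermonde θ * (Matrix.vandermonde θ)⁻¹) := by
              rw [Matrix.mul_nonsing_inv _ hu, Matrix.vecMul_one]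
        _ = (x ᵥ* Matrix.vandermonde θ) ᵥ* (Matrix.vandermonde θ)⁻¹ := by
              rw [Matrix.vecMul_vecMul]
        _ = 0 := by rw [hv, Matrix.zero_vecMul]
    have := congrFun hxz r
    simp only [hx, Pi.zero_apply] at this
    linarith
  · -- (i) → (iii)
    have hr := h r
    have hs := h s
    ext i j
    fin_cases i <;> fin_cases j <;>
      simp [Matrix.mul_apply, Fin.sum_univ_two, hsymE] <;>
      first
        | ring1
        | linear_combination E r a b * hs - E s a b * hr
        | linear_combination E s a b * hr - E r a b * hs
        | linear_combination 2 * E r a b * hs - 2 * E s a b * hr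
        | linear_combination 2 * E s a b * hr - 2 * E r a b * hs
  · -- (iii) → common eigenvector data
    have hEab : ∃ r, E r a b ≠ 0 := by
      by_contra hno
      push_neg at hno
      obtain ⟨k, hk⟩ := hconn a b
      apply hk
      rw [hEntry]
      simp [hno]
    obtain ⟨r₀, hr₀⟩ := hEab
    obtain ⟨c', hc'⟩ : ∃ x : ℝ, x = (E r₀ a a - E r₀ b b) / E r₀ a b := ⟨_, rfl⟩
    have hrel : ∀ r, E r a a - E r b b = c' * E r a b := by
      intro r
      have h01 := congrFun (congrFun (hcomm r r₀) 0) 1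
      simp [Matrix.mul_apply, Fin.sum_univ_two, hsymE] at h01
      rw [hc']
      field_simp
      linear_combination h01
    have hsq4 : Real.sqrt (c' ^ 2 + 4) ^ 2 = c' ^ 2 + 4 := Real.sq_sqrt (by positivity)
    obtain ⟨t, ht⟩ : ∃ x : ℝ, x = (c' + Real.sqrt (c' ^ 2 + 4)) / 2 := ⟨_, rfl⟩
    have habs : |c'| < Real.sqrt (c' ^ 2 + 4) := by
      have h1 : |c'| = Real.sqrt (c' ^ 2) := (Real.sqrt_sq_eq_abs c').symm
      rw [h1]
      exact Real.sqrt_lt_sqrt (sq_nonneg _) (by linarith)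
    have htpos : 0 < t := by
      have h1 : -c' ≤ |c'| := neg_le_abs c'
      rw [ht]
      linarith
    have hteq : t * t - c' * t - 1 = 0 := by
      rw [ht]
      linear_combination hsq4 / 4
    have h1t : (0:ℝ) < 1 + t ^ 2 := by positivity
    obtain ⟨s, hs⟩ : ∃ x : ℝ, x = Real.sqrt (1 + t ^ 2) := ⟨_, rfl⟩
    have hspos : 0 < s := hs ▸ Real.sqrt_pos.mpr h1t
    have hssq : s ^ 2 = 1 + t ^ 2 := hs ▸ Real.sq_sqrt (le_of_lt h1t)
    refine ⟨t / s, 1 / s, div_ne_zero (ne_of_gt htpos) (ne_of_gt hspos),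
      one_div_ne_zero (ne_of_gt hspos), ?_, ?_⟩
    · field_simp
      linarith [hssq]
    · intro r
      have hratio : t / s / (1 / s) - 1 / s / (t / s) = c' := by
        field_simp
        linear_combination hteq
      rw [hratio]
      exact hrel r
end

section
/- If X is a connected regular graph and a, b are fractionally cospectral vertices with parameters p, q, then a and b are cospectral (p = ±q). -/
/-!
The eigenvalue `k` of a connected `k`-regular graph has the constant vectors as eigenspace, so the
idempotent `E` with `E 𝟙 ≠ 0` (one exists since `∑ E r = 1`) has constant rows and columns: it is a
nonzero multiple of `J`. Its diagonal entries at `a` and `b` therefore agree and its entry at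
`(a, b)` is nonzero, so fractional cospectrality at `E` forces `p / q - q / p = 0`, i.e.
`p ^ 2 = q ^ 2`; with that coefficient gone, the condition says `E r a a = E r b b` for every `r`.
-/

open Matrix

section OrthogonalIdempotents

variable {ι R A : Type*} [Fintype ι] [CommSemiring R] [Semiring A] [Algebra R A]
  {θ : ι → R} {E : ι → A}

theorem sum_smul_mul_of_orthogonal_idempotents (hidem : ∀ r, E r * E r = E r)
    (horth : ∀ r s, r ≠ s → E r * E s = 0) (r : ι) :
    (∑ s, θ s • E s) * E r = θ r • E r := by
  rw [Finset.sum_mul, Finset.sum_eq_single_of_mem r (Finset.mem_univ r), smul_mul_assoc, hidem]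
  intro s _ hs
  rw [smul_mul_assoc, horth s r hs, smul_zero]

theorem mul_sum_smul_of_orthogonal_idempotents (hidem : ∀ r, E r * E r = E r)
    (horth : ∀ r s, r ≠ s → E r * E s = 0) (r : ι) :
    E r * (∑ s, θ s • E s) = θ r • E r := by
  rw [Finset.mul_sum, Finset.sum_eq_single_of_mem r (Finset.mem_univ r), mul_smul_comm, hidem]
  intro s _ hs
  rw [mul_smul_comm, horth r s (Ne.symm hs), smul_zero]

end OrthogonalIdempotents

theorem Matrix.eq_of_mul_eq_smul_of_mulVec_eq_smul {m n R : Type*} [Fintype n] [CommRing R]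
    [NoZeroDivisors R] {M : Matrix m n R} {A : Matrix n n R} {v : n → R} {θ μ : R}
    (hM : M * A = θ • M) (hv : A *ᵥ v = μ • v) (hMv : M *ᵥ v ≠ 0) : θ = μ := by
  refine smul_left_injective R hMv ?_
  calc θ • M *ᵥ v = (M * A) *ᵥ v := by rw [hM, smul_mulVec]
    _ = μ • M *ᵥ v := by rw [← mulVec_mulVec, hv, mulVec_smul]

namespace SimpleGraph

variable {V : Type*} [Fintype V] [DecidableEq V] {G : SimpleGraph V} [DecidableRel G.Adj] {k : ℕ}

theorem Connected.eq_of_adjMatrix_mulVec_eq_smul (hconn : G.Connected)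
    (hreg : G.IsRegularOfDegree k) {x : V → ℝ} (hx : G.adjMatrix ℝ *ᵥ x = (k : ℝ) • x)
    (i j : V) : x i = x j := by
  have hlap : G.lapMatrix ℝ *ᵥ x = 0 := by
    ext v
    rw [lapMatrix_mulVec_apply, ← adjMatrix_mulVec_apply, hx, hreg v]
    simp
  exact (lapMatrix_mulVec_eq_zero_iff_forall_reachable G).1 hlap i j (hconn i j)

theorem Connected.apply_eq_of_mul_adjMatrix_eq_smul {m : Type*} (hconn : G.Connected)
    (hreg : G.IsRegularOfDegree k) {M : Matrix m V ℝ}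
    (hM : M * G.adjMatrix ℝ = (k : ℝ) • M) (i : m) (j j' : V) : M i j = M i j' := by
  refine hconn.eq_of_adjMatrix_mulVec_eq_smul hreg ?_ j j'
  rw [← vecMul_transpose, transpose_adjMatrix, ← mul_apply_eq_vecMul, hM]
  rfl

end SimpleGraph

theorem eq_or_eq_neg_of_div_sub_div_eq_zero {K : Type*} [Field K] {p q : K} (hp : p ≠ 0)
    (hq : q ≠ 0) (h : p / q - q / p = 0) : p = q ∨ p = -q := by
  rw [div_sub_div _ _ hq hp, div_eq_zero_iff, sub_eq_zero] at h
  refine sq_eq_sq_iff_eq_or_eq_neg.1 ?_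
  simpa [sq, hp, hq] using h

theorem regular_fractionally_cospectral_implies_cospectral_general {n d k : ℕ}
    (G : SimpleGraph (Fin n)) [DecidableRel G.Adj]
    (hconn : G.Connected) (hreg : G.IsRegularOfDegree k)
    (θ : Fin (d + 1) → ℝ) (E : Fin (d + 1) → Matrix (Fin n) (Fin n) ℝ)
    (hA : G.adjMatrix ℝ = ∑ r, θ r • E r)
    (hidem : ∀ r, E r * E r = E r)
    (horth : ∀ r s, r ≠ s → E r * E s = 0)
    (hsum : ∑ r, E r = 1)
    (a b : Fin n)
    (p q : ℝ) (hp : p ≠ 0) (hq : q ≠ 0)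
    (hfc : ∀ r, E r a a - E r b b = (p / q - q / p) * E r a b) :
    (p = q ∨ p = -q) ∧ ∀ r, E r a a = E r b b := by
  obtain ⟨r, -, hr⟩ : ∃ r ∈ Finset.univ, E r *ᵥ (fun _ => 1) ≠ 0 := by
    refine Finset.exists_ne_zero_of_sum_ne_zero ?_
    rw [← sum_mulVec, hsum, one_mulVec]
    exact Function.ne_iff.2 ⟨a, one_ne_zero⟩
  have hone : G.adjMatrix ℝ *ᵥ (fun _ => 1) = (k : ℝ) • fun _ => 1 :=
    funext fun i => by simpa using G.adjMatrix_mulVec_const_apply_of_regular hreg (a := (1 : ℝ))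
  have hEA : E r * G.adjMatrix ℝ = θ r • E r := by
    rw [hA, mul_sum_smul_of_orthogonal_idempotents hidem horth]
  have hθr : θ r = k := eq_of_mul_eq_smul_of_mulVec_eq_smul hEA hone hr
  have hright : E r * G.adjMatrix ℝ = (k : ℝ) • E r := hθr ▸ hEA
  have hleft : (E r)ᵀ * G.adjMatrix ℝ = (k : ℝ) • (E r)ᵀ := by
    rw [← hθr, ← G.transpose_adjMatrix, ← transpose_mul, hA,
      sum_smul_mul_of_orthogonal_idempotents hidem horth, transpose_smul]
  have hconst : ∀ i j, E r i j = E r a b := fun i j =>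
    (hconn.apply_eq_of_mul_adjMatrix_eq_smul hreg hright i j b).trans
      (hconn.apply_eq_of_mul_adjMatrix_eq_smul hreg hleft b i a)
  have hab : E r a b ≠ 0 := fun h => hr (by ext i; simp [mulVec, dotProduct, hconst, h])
  have hc : p / q - q / p = 0 :=
    (mul_eq_zero.1 (by rw [← hfc r, hconst a a, hconst b b, sub_self])).resolve_right hab
  refine ⟨eq_or_eq_neg_of_div_sub_div_eq_zero hp hq hc, fun s => ?_⟩
  rw [← sub_eq_zero, hfc s, hc, zero_mul]

/-- In a connected regular graph, fractionally cospectral vertices are in fact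
cospectral (the parameters satisfy `p = ±q`). -/
theorem regular_fractionally_cospectral_implies_cospectral {n d k : ℕ}
    (G : SimpleGraph (Fin n)) [DecidableRel G.Adj]
    (hconn : G.Connected) (hreg : G.IsRegularOfDegree k)
    (θ : Fin (d + 1) → ℝ) (E : Fin (d + 1) → Matrix (Fin n) (Fin n) ℝ)
    (hA : G.adjMatrix ℝ = ∑ r, θ r • E r) (hθ : Function.Injective θ)
    (hsymm : ∀ r, (E r).IsSymm)
    (hidem : ∀ r, E r * E r = E r)
    (horth : ∀ r s, r ≠ s → E r * E s = 0)
    (hsum : ∑ r, E r = 1)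
    (a b : Fin n) (hab : a ≠ b)
    (p q : ℝ) (hp : p ≠ 0) (hq : q ≠ 0) (hpq : p ^ 2 + q ^ 2 = 1)
    (hfc : ∀ r, E r a a - E r b b = (p / q - q / p) * E r a b) :
    (p = q ∨ p = -q) ∧ ∀ r, E r a a = E r b b :=
  regular_fractionally_cospectral_implies_cospectral_general G hconn hreg θ E hA hidem horth hsum a
    b p q hp hq hfc
end

section
/- Let H be a normalized n×n Hadamard matrix, p_1,…,p_{n−1} distinct odd primes, λ_0 = 0 and λ_r (1 ≤ r ≤ n−1) integers satisfying λ_r ≡ (1 − H_{j,r})/2 (mod p_j) for each j = 1,…,n−1. Let L = (1/n) H diag(λ_0,…,λ_{n−1}) H^T and U(t) = e^{-itL}. Then for each k = 1,…,n−1, U(2π/p_k) e_0 = ½(1 + e^{-2πi/p_k}) e_0 + ½(1 − e^{-2πi/p_k}) e_k; in particular proper fractional revival occurs from vertex 0 to vertex k at time 2π/p_k, for every k, so fractional revival is not monogamous. -/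
/-! The columns of `H` are orthogonal eigenvectors of `L`, so `U(t) = n⁻¹ • H diag(e^{-itλ_r}) Hᵀ`.
At `t = 2π/p_k` we have `e^{-itλ_r} = ω ^ λ_r` with `ω = e^{-2πi/p_k}` a primitive `p_k`-th root of
unity, and the congruences make this `1` or `ω` according as `H_{k,r} = 1` or `-1`, i.e. it equals
`(1 + ω)/2 · H_{0,r} + (1 - ω)/2 · H_{k,r}`. This vector is `Hᵀ` applied to
`(1 + ω)/2 • e₀ + (1 - ω)/2 • e_k`, and `n⁻¹ • H Hᵀ = 1`. Both coefficients are nonzero because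
`ω ≠ ±1` when `p_k > 2`. -/

open Matrix

open Complex
open scoped Real

section Orthogonal

variable {ι 𝕜 : Type*} [Fintype ι] [DecidableEq ι] [Field 𝕜] {K : Matrix ι ι 𝕜} {c : 𝕜}

theorem Matrix.mul_inv_smul_transpose (hc : c ≠ 0) (hK : K * Kᵀ = c • 1) : K * (c⁻¹ • Kᵀ) = 1 := by
  rw [mul_smul_comm, hK, smul_smul, inv_mul_cancel₀ hc, one_smul]

theorem Matrix.smul_mul_diagonal_mul_transpose_mulVec_single (hc : c ≠ 0) (hK : K * Kᵀ = c • 1)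
    {w v : ι → 𝕜} {i : ι} (hv : (fun r => w r * K i r) = Kᵀ *ᵥ v) :
    (c⁻¹ • (K * diagonal w * Kᵀ)) *ᵥ Pi.single i 1 = v := by
  have hw : diagonal w *ᵥ Kᵀ.col i = fun r => w r * K i r := by
    funext r
    rw [mulVec_diagonal, col_apply, transpose_apply]
  rw [smul_mulVec, ← mulVec_mulVec, ← mulVec_mulVec, mulVec_single_one, hw, hv, mulVec_mulVec,
    ← smul_mulVec, ← mul_smul_comm, Matrix.mul_inv_smul_transpose hc hK, one_mulVec]

end Orthogonal

theorem Matrix.exp_smul_conj_diagonal {ι : Type*} [Fintype ι] [DecidableEq ι] {K : Matrix ι ι ℂ}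
    {c : ℂ} (hc : c ≠ 0) (hK : K * Kᵀ = c • 1) (s : ℂ) (d : ι → ℂ) :
    NormedSpace.exp (s • (c⁻¹ • (K * diagonal d * Kᵀ)))
      = c⁻¹ • (K * diagonal (fun r => exp (s * d r)) * Kᵀ) := by
  have hinv := Matrix.mul_inv_smul_transpose hc hK
  have hunit : IsUnit K := (isUnit_iff_isUnit_det K).2 (isUnit_det_of_right_inverse hinv)
  have hconj : s • (c⁻¹ • (K * diagonal d * Kᵀ)) = K * diagonal (s • d) * K⁻¹ := by
    rw [inv_eq_right_inv hinv, diagonal_smul]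
    simp only [Matrix.mul_smul, Matrix.smul_mul, smul_comm s]
  have hexp : NormedSpace.exp (s • d) = fun r => exp (s * d r) := by
    funext r
    rw [Pi.coe_exp, ← exp_eq_exp_ℂ]
    rfl
  rw [hconj, exp_conj _ _ hunit, exp_diagonal, hexp, inv_eq_right_inv hinv, Matrix.mul_smul]

theorem Matrix.map_ofReal_mul_transpose {ι : Type*} [Fintype ι] [DecidableEq ι]
    {H : Matrix ι ι ℝ} {c : ℝ} (hH : H * Hᵀ = c • 1) :
    H.map ofReal * (H.map ofReal)ᵀ = (c : ℂ) • 1 := by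
  rw [← transpose_map]
  ext i j
  have hij := congrFun (congrFun hH i) j
  simp only [mul_apply, map_apply, transpose_apply, smul_apply, smul_eq_mul, one_apply] at hij ⊢
  split_ifs at hij ⊢ <;> exact_mod_cast hij

theorem transU_smul_mul_diagonal_mul_transpose {n : ℕ} {H : Matrix (Fin n) (Fin n) ℝ} {c : ℝ}
    (hc : c ≠ 0) (hH : H * Hᵀ = c • 1) (d : Fin n → ℝ) (t : ℝ) :
    transU (c⁻¹ • (H * diagonal d * Hᵀ)) t
      = (c : ℂ)⁻¹ • (H.map ofReal * diagonal (fun r => exp (-I * t * d r)) * (H.map ofReal)ᵀ) := by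
  have hmap : (c⁻¹ • (H * diagonal d * Hᵀ)).map ofReal
      = (c : ℂ)⁻¹ • (H.map ofReal * diagonal (fun r => (d r : ℂ)) * (H.map ofReal)ᵀ) := by
    ext i j
    simp [mul_apply, diagonal_apply]
  rw [transU, hmap, Matrix.exp_smul_conj_diagonal (ofReal_ne_zero.2 hc)
    (Matrix.map_ofReal_mul_transpose hH)]

theorem isPrimitiveRoot_exp_neg_two_pi_I_div {p : ℕ} (hp : p ≠ 0) :
    IsPrimitiveRoot (exp (-(2 * π * I) / p)) p := by
  rw [neg_div, exp_neg]
  exact (isPrimitiveRoot_exp p hp).inv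

theorem exp_neg_I_mul_two_pi_div_mul_intCast (p : ℕ) (m : ℤ) :
    exp (-I * ((2 * π / p : ℝ) : ℂ) * ((m : ℝ) : ℂ)) = exp (-(2 * π * I) / p) ^ m := by
  rw [← exp_int_mul]
  push_cast
  ring_nf

namespace IsPrimitiveRoot

variable {F : Type*} [Field F] {ζ : F} {p : ℕ}

theorem zpow_eq_self_of_dvd_sub_one (hζ : IsPrimitiveRoot ζ p) (hp : p ≠ 0) {m : ℤ}
    (hm : (p : ℤ) ∣ m - 1) : ζ ^ m = ζ := by
  rw [← sub_add_cancel m 1, zpow_add_one₀ (hζ.ne_zero hp), (hζ.zpow_eq_one_iff_dvd _).2 hm,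
    one_mul]

theorem one_add_ne_zero (hζ : IsPrimitiveRoot ζ p) (hp : 2 < p) : 1 + ζ ≠ 0 := by
  intro h
  have h2 : ζ ^ 2 = 1 := by rw [eq_neg_of_add_eq_zero_right h]; norm_num
  exact absurd (Nat.le_of_dvd two_pos ((hζ.pow_eq_one_iff_dvd 2).1 h2)) (by omega)

end IsPrimitiveRoot

theorem IsPrimitiveRoot.zpow_eq_of_sign {ζ : ℂ} {p : ℕ} (hζ : IsPrimitiveRoot ζ p) (hp : p ≠ 0)
    {m : ℤ} {s : ℝ} (hs : s = 1 ∨ s = -1) (h1 : s = 1 → (p : ℤ) ∣ m)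
    (h2 : s = -1 → (p : ℤ) ∣ m - 1) : ζ ^ m = (1 + ζ) / 2 + (1 - ζ) / 2 * s := by
  rcases hs with rfl | rfl
  · rw [(hζ.zpow_eq_one_iff_dvd m).2 (h1 rfl)]; push_cast; ring
  · rw [hζ.zpow_eq_self_of_dvd_sub_one hp (h2 rfl)]; push_cast; ring

theorem hadamard_polygamous_fractional_revival_general {n : ℕ} [NeZero n]
    (H : Matrix (Fin n) (Fin n) ℝ)
    (hent : ∀ i j, H i j = 1 ∨ H i j = -1)
    (hHad : H * Hᵀ = (n : ℝ) • (1 : Matrix (Fin n) (Fin n) ℝ))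
    (hrow : ∀ j, H 0 j = 1)
    (p : Fin n → ℕ)
    (hp : ∀ j : Fin n, j ≠ 0 → Nat.Prime (p j) ∧ Odd (p j))
    (lam : Fin n → ℤ)
    (hcong : ∀ j r : Fin n, j ≠ 0 →
      (H j r = 1 → (p j : ℤ) ∣ lam r) ∧ (H j r = -1 → (p j : ℤ) ∣ (lam r - 1))) :
    ∀ k : Fin n, k ≠ 0 →
      (transU ((n : ℝ)⁻¹ • (H * Matrix.diagonal (fun r => (lam r : ℝ)) * Hᵀ))
          (2 * Real.pi / p k)).mulVec (Pi.single (0 : Fin n) (1 : ℂ))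
        = ((1 + Complex.exp (-(2 * Real.pi * Complex.I) / p k)) / 2) •
            (Pi.single (0 : Fin n) 1 : Fin n → ℂ) +
          ((1 - Complex.exp (-(2 * Real.pi * Complex.I) / p k)) / 2) •
            (Pi.single k 1 : Fin n → ℂ) ∧
      ((1 + Complex.exp (-(2 * Real.pi * Complex.I) / p k)) / 2) ≠ 0 ∧
      ((1 - Complex.exp (-(2 * Real.pi * Complex.I) / p k)) / 2) ≠ 0 := by
  intro k hk
  obtain ⟨hpk, hodd⟩ := hp k hk
  have hp2 : 2 < p k :=
    hpk.two_le.lt_of_ne (by rintro h; rw [← h] at hodd; exact absurd hodd (by decide))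
  have hω := isPrimitiveRoot_exp_neg_two_pi_I_div hpk.ne_zero
  refine ⟨?_, div_ne_zero (hω.one_add_ne_zero hp2) two_ne_zero,
    div_ne_zero (sub_ne_zero.2 (hω.ne_one hpk.one_lt).symm) two_ne_zero⟩
  have hn0 : (n : ℝ) ≠ 0 := Nat.cast_ne_zero.2 (NeZero.ne n)
  rw [transU_smul_mul_diagonal_mul_transpose hn0 hHad, ← ofReal_natCast]
  refine Matrix.smul_mul_diagonal_mul_transpose_mulVec_single (ofReal_ne_zero.2 hn0)
    (Matrix.map_ofReal_mul_transpose hHad) ?_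
  funext r
  rw [exp_neg_I_mul_two_pi_div_mul_intCast,
    hω.zpow_eq_of_sign hpk.ne_zero (hent k r) (hcong k r hk).1 (hcong k r hk).2]
  simp [mulVec_add, mulVec_smul, hrow]

/-- Polygamy of fractional revival: for the Laplacian `L = (1/n) H D H^T`
built from a normalized Hadamard matrix `H` and eigenvalues `λ_r` chosen by the
Chinese remainder theorem modulo distinct odd primes `p_1, …, p_{n-1}`, proper
fractional revival occurs from vertex `0` to vertex `k` at time `2π/p_k`, for
every `k = 1, …, n-1`; so fractional revival is not monogamous. -/
theorem hadamard_polygamous_fractional_revival {n : ℕ} [NeZero n] (hn : 1 < n)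
    (H : Matrix (Fin n) (Fin n) ℝ)
    (hent : ∀ i j, H i j = 1 ∨ H i j = -1)
    (hHad : H * Hᵀ = (n : ℝ) • (1 : Matrix (Fin n) (Fin n) ℝ))
    (hrow : ∀ j, H 0 j = 1) (hcol : ∀ i, H i 0 = 1)
    (p : Fin n → ℕ)
    (hp : ∀ j : Fin n, j ≠ 0 → Nat.Prime (p j) ∧ Odd (p j))
    (hpdist : ∀ j l : Fin n, j ≠ 0 → l ≠ 0 → p j = p l → j = l)
    (lam : Fin n → ℤ) (hlam0 : lam 0 = 0)
    (hcong : ∀ j r : Fin n, j ≠ 0 →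
      (H j r = 1 → (p j : ℤ) ∣ lam r) ∧ (H j r = -1 → (p j : ℤ) ∣ (lam r - 1))) :
    ∀ k : Fin n, k ≠ 0 →
      (transU ((n : ℝ)⁻¹ • (H * Matrix.diagonal (fun r => (lam r : ℝ)) * Hᵀ))
          (2 * Real.pi / p k)).mulVec (Pi.single (0 : Fin n) (1 : ℂ))
        = ((1 + Complex.exp (-(2 * Real.pi * Complex.I) / p k)) / 2) •
            (Pi.single (0 : Fin n) 1 : Fin n → ℂ) +
          ((1 - Complex.exp (-(2 * Real.pi * Complex.I) / p k)) / 2) •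
            (Pi.single k 1 : Fin n → ℂ) ∧
      ((1 + Complex.exp (-(2 * Real.pi * Complex.I) / p k)) / 2) ≠ 0 ∧
      ((1 - Complex.exp (-(2 * Real.pi * Complex.I) / p k)) / 2) ≠ 0 :=
  hadamard_polygamous_fractional_revival_general H hent hHad hrow p hp lam hcong
end
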